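/- arXiv:0804.4316 — 3 statements merged into one kernel-verified Lean document; each statement's English description precedes it below -/
import Mathlib

section
/- For any 2×2 complex matrix ρ, the Pauli-twirl of the map ρ ↦ Σ_k A_k ρ A_k† (with A_k the amplitude-damping/dephasing Kraus operators with parameters γ, λ as above), namely (1/4)·Σ_{A ∈ {I,X,Y,Z}} A† E(AρA†) A, equals (1-p_x-p_y-p_z)ρ + p_x XρX + p_y YρY + p_z ZρZ, where p_x = p_y = γ/4 and p_z = (2-γ-2√(1-λ-γ))/4. -/
open Matrix Complex

noncomputable def PauliX : Matrix (Fin 2) (Fin 2) ℂ := !![0, 1; 1, 0]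
noncomputable def PauliY : Matrix (Fin 2) (Fin 2) ℂ := !![0, -Complex.I; Complex.I, 0]
noncomputable def PauliZ : Matrix (Fin 2) (Fin 2) ℂ := !![1, 0; 0, -1]

noncomputable def A0 (γ lam : ℝ) : Matrix (Fin 2) (Fin 2) ℂ :=
  !![1, 0; 0, (Real.sqrt (1 - lam - γ) : ℂ)]
noncomputable def A1 (lam : ℝ) : Matrix (Fin 2) (Fin 2) ℂ :=
  !![0, 0; 0, (Real.sqrt lam : ℂ)]
noncomputable def A2 (γ : ℝ) : Matrix (Fin 2) (Fin 2) ℂ :=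
  !![0, (Real.sqrt γ : ℂ); 0, 0]

/-- The amplitude damping/dephasing channel. -/
noncomputable def ADchannel (γ lam : ℝ) (σ : Matrix (Fin 2) (Fin 2) ℂ) :
    Matrix (Fin 2) (Fin 2) ℂ :=
  A0 γ lam * σ * (A0 γ lam)ᴴ + A1 lam * σ * (A1 lam)ᴴ + A2 γ * σ * (A2 γ)ᴴ

/-!
Write each Kraus operator in the Pauli basis, `A = a • 1 + b • X + c • Y + d • Z`. Twirling
`σ ↦ A σ Aᴴ` cancels every cross term `P σ Q` with `P ≠ Q` and leaves the Pauli channel with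
weights `|a|², |b|², |c|², |d|²`; the twirl is additive over Kraus operators. With
`s = √(1 - λ - γ)` we have `A0 = (1 + s)/2 • 1 + (1 - s)/2 • Z`, `A1 = √λ/2 • (1 - Z)` and
`A2 = √γ/2 • (X + i Y)`, and summing the weights gives the stated probabilities.
-/

local notation "M₂" => Matrix (Fin 2) (Fin 2) ℂ

noncomputable def pauliTwirl (Φ : M₂ → M₂) (ρ : M₂) : M₂ :=
  (1 / 4 : ℂ) •
    ((1 : M₂)ᴴ * Φ ((1 : M₂) * ρ * (1 : M₂)ᴴ) * 1 +
      PauliXᴴ * Φ (PauliX * ρ * PauliXᴴ) * PauliX +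
      PauliYᴴ * Φ (PauliY * ρ * PauliYᴴ) * PauliY +
      PauliZᴴ * Φ (PauliZ * ρ * PauliZᴴ) * PauliZ)

noncomputable def pauliChannel (pI pX pY pZ : ℂ) (ρ : M₂) : M₂ :=
  pI • ρ + pX • (PauliX * ρ * PauliX) + pY • (PauliY * ρ * PauliY) + pZ • (PauliZ * ρ * PauliZ)

noncomputable def pauliCombination (a b c d : ℂ) : M₂ :=
  a • 1 + b • PauliX + c • PauliY + d • PauliZ

theorem pauliTwirl_add (Φ Ψ : M₂ → M₂) (ρ : M₂) :
    pauliTwirl (fun σ => Φ σ + Ψ σ) ρ = pauliTwirl Φ ρ + pauliTwirl Ψ ρ := by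
  simp only [pauliTwirl, Matrix.mul_add, Matrix.add_mul, smul_add]
  abel

theorem pauliChannel_add (pI pX pY pZ qI qX qY qZ : ℂ) (ρ : M₂) :
    pauliChannel pI pX pY pZ ρ + pauliChannel qI qX qY qZ ρ =
      pauliChannel (pI + qI) (pX + qX) (pY + qY) (pZ + qZ) ρ := by
  simp only [pauliChannel, add_smul]
  abel

theorem Matrix.conjTranspose_fin_two_of {α : Type*} [Star α] (a b c d : α) :
    !![a, b; c, d]ᴴ = !![star a, star c; star b, star d] := by
  ext i j
  fin_cases i <;> fin_cases j <;> rfl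

theorem pauliX_conjTranspose : PauliXᴴ = PauliX := by
  simp [PauliX, conjTranspose_fin_two_of]

theorem pauliY_conjTranspose : PauliYᴴ = PauliY := by
  simp [PauliY, conjTranspose_fin_two_of]

theorem pauliZ_conjTranspose : PauliZᴴ = PauliZ := by
  simp [PauliZ, conjTranspose_fin_two_of]

theorem pauliCombination_eq_of (a b c d : ℂ) :
    pauliCombination a b c d = !![a + d, b - I * c; b + I * c, a - d] := by
  ext i j
  fin_cases i <;> fin_cases j <;> simp [pauliCombination, PauliX, PauliY, PauliZ] <;> ring

theorem pauliTwirl_conj_pauliCombination (a b c d : ℂ) (ρ : M₂) :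
    pauliTwirl (fun σ => pauliCombination a b c d * σ * (pauliCombination a b c d)ᴴ) ρ =
      pauliChannel (normSq a) (normSq b) (normSq c) (normSq d) ρ := by
  simp only [pauliTwirl, pauliChannel, pauliCombination_eq_of, conjTranspose_fin_two_of,
    pauliX_conjTranspose, pauliY_conjTranspose, pauliZ_conjTranspose, Matrix.conjTranspose_one]
  rw [eta_fin_two ρ]
  simp only [PauliX, PauliY, PauliZ, one_fin_two, mul_fin_two, smul_of, of_add_of]
  ext i j
  fin_cases i <;> fin_cases j <;>
    simp [normSq_eq_conj_mul_self] <;> ring_nf <;> simp [I_pow_eq_pow_mod] <;> ring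

theorem A0_eq_pauliCombination (γ lam : ℝ) :
    A0 γ lam =
      pauliCombination ((1 + √(1 - lam - γ)) / 2 : ℝ) 0 0 ((1 - √(1 - lam - γ)) / 2 : ℝ) := by
  rw [pauliCombination_eq_of]
  ext i j
  fin_cases i <;> fin_cases j <;> simp [A0] <;> ring

theorem A1_eq_pauliCombination (lam : ℝ) :
    A1 lam = pauliCombination (√lam / 2 : ℝ) 0 0 (-(√lam / 2) : ℝ) := by
  rw [pauliCombination_eq_of]
  ext i j
  fin_cases i <;> fin_cases j <;> simp [A1]

theorem A2_eq_pauliCombination (γ : ℝ) :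
    A2 γ = pauliCombination 0 (√γ / 2 : ℝ) (I * (√γ / 2 : ℝ)) 0 := by
  rw [pauliCombination_eq_of]
  ext i j
  fin_cases i <;> fin_cases j <;> simp [A2, ← mul_assoc]

theorem pauliTwirl_ADchannel {γ lam : ℝ} (hγ : 0 ≤ γ) (hlam : 0 ≤ lam) (h : γ + lam ≤ 1)
    (ρ : M₂) :
    pauliTwirl (ADchannel γ lam) ρ =
      pauliChannel ((2 - γ + 2 * √(1 - lam - γ)) / 4 : ℝ) (γ / 4 : ℝ) (γ / 4 : ℝ)
        ((2 - γ - 2 * √(1 - lam - γ)) / 4 : ℝ) ρ := by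
  have hs : √(1 - lam - γ) ^ 2 = 1 - lam - γ := Real.sq_sqrt (by linarith)
  have hl : √lam ^ 2 = lam := Real.sq_sqrt hlam
  have hg : √γ ^ 2 = γ := Real.sq_sqrt hγ
  unfold ADchannel
  rw [pauliTwirl_add, pauliTwirl_add, A0_eq_pauliCombination, A1_eq_pauliCombination,
    A2_eq_pauliCombination, pauliTwirl_conj_pauliCombination, pauliTwirl_conj_pauliCombination,
    pauliTwirl_conj_pauliCombination, pauliChannel_add, pauliChannel_add]
  congr 1 <;> norm_cast <;> simp only [normSq_ofReal, normSq_mul, normSq_I, map_zero] <;>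
    linarith

/-- The Pauli-twirl of the amplitude damping/dephasing channel is the Pauli channel
with `p_x = p_y = γ/4` and `p_z = (2 - γ - 2√(1-λ-γ))/4`. -/
theorem pauli_twirl_channel (γ lam : ℝ) (hγ : 0 ≤ γ) (hlam : 0 ≤ lam) (h : γ + lam ≤ 1)
    (ρ : Matrix (Fin 2) (Fin 2) ℂ) :
    (1 / 4 : ℂ) •
      ((1 : Matrix (Fin 2) (Fin 2) ℂ)ᴴ *
          ADchannel γ lam ((1 : Matrix (Fin 2) (Fin 2) ℂ) * ρ *
            (1 : Matrix (Fin 2) (Fin 2) ℂ)ᴴ) * 1 +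
        PauliXᴴ * ADchannel γ lam (PauliX * ρ * PauliXᴴ) * PauliX +
        PauliYᴴ * ADchannel γ lam (PauliY * ρ * PauliYᴴ) * PauliY +
        PauliZᴴ * ADchannel γ lam (PauliZ * ρ * PauliZᴴ) * PauliZ) =
      (((1 - γ / 4 - γ / 4 - (2 - γ - 2 * Real.sqrt (1 - lam - γ)) / 4) : ℝ) : ℂ) • ρ +
      ((γ / 4 : ℝ) : ℂ) • (PauliX * ρ * PauliX) +
      ((γ / 4 : ℝ) : ℂ) • (PauliY * ρ * PauliY) +
      (((2 - γ - 2 * Real.sqrt (1 - lam - γ)) / 4 : ℝ) : ℂ) • (PauliZ * ρ * PauliZ) := by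
  have hI : 1 - γ / 4 - γ / 4 - (2 - γ - 2 * √(1 - lam - γ)) / 4
      = (2 - γ + 2 * √(1 - lam - γ)) / 4 := by ring
  rw [hI]
  exact pauliTwirl_ADchannel hγ hlam h ρ
end

section
/- Let p be prime, s ≥ 1, q = p^s, m ≥ 2, and suppose 1 < μ_z < m and m - μ_z + 1 ≤ μ_x < m. Then the subfield subcode over F_p of GRM_q((q-1)(m - μ_x), m) is contained in the trace code tr_{q/p}(GRM_q(μ_z(q-1) - 1, m)). -/
/-!
Multiplying by an element `α` of trace one shows that the subfield subcode of any `L`-linear code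
lies in its trace code: for `x` with values in `K`, `tr (α x) = x tr α = x`. It remains to note that
`GRM` is closed under scalars and nested, and `(q - 1)(m - μx) ≤ μz(q - 1) - 1` because
`m - μx ≤ μz - 1`.
-/

/-- The generalized Reed–Muller code `GRM_q(ν, m)` of length `q^m` over a field `L`
(evaluation-code form). -/
def GRM (L : Type*) [Field L] (m ν : ℕ) : Set ((Fin m → L) → L) :=
  {c | ∃ f : MvPolynomial (Fin m) L, f.totalDegree ≤ ν ∧
        ∀ x : Fin m → L, c x = MvPolynomial.eval x f}

open MvPolynomial

section Codes

variable (K : Type*) {L ι : Type*} [Field K] [Field L] [Algebra K L]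

def subfieldSubcode (C : Set (ι → L)) : Set (ι → K) :=
  {x | (fun i => algebraMap K L (x i)) ∈ C}

def traceCode (C : Set (ι → L)) : Set (ι → K) :=
  {x | ∃ c ∈ C, x = fun i => Algebra.trace K L (c i)}

variable {K}

theorem traceCode_mono {C D : Set (ι → L)} (h : C ⊆ D) : traceCode K C ⊆ traceCode K D :=
  fun _ ⟨c, hc, hx⟩ => ⟨c, h hc, hx⟩

theorem subfieldSubcode_subset_traceCode [FiniteDimensional K L] [Algebra.IsSeparable K L]
    {C : Set (ι → L)} (hC : ∀ (a : L), ∀ c ∈ C, (fun i => a * c i) ∈ C) :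
    subfieldSubcode K C ⊆ traceCode K C := by
  intro x hx
  obtain ⟨α, hα⟩ := Algebra.trace_surjective K L 1
  refine ⟨_, hC α _ hx, funext fun i => ?_⟩
  rw [mul_comm, ← Algebra.smul_def, map_smul, hα, smul_eq_mul, mul_one]

end Codes

section GRM

variable {L : Type*} [Field L] {m : ℕ}

theorem GRM_mono {ν ν' : ℕ} (h : ν ≤ ν') : GRM L m ν ⊆ GRM L m ν' :=
  fun _ ⟨f, hf, hc⟩ => ⟨f, hf.trans h, hc⟩

theorem const_mul_mem_GRM {ν : ℕ} (a : L) {c : (Fin m → L) → L} (hc : c ∈ GRM L m ν) :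
    (fun v => a * c v) ∈ GRM L m ν := by
  obtain ⟨f, hf, hcf⟩ := hc
  refine ⟨a • f, (totalDegree_smul_le a f).trans hf, fun v => ?_⟩
  simp only [hcf, smul_eval]

end GRM

theorem Nat.mul_le_mul_sub_one {q a b : ℕ} (h : a ≤ b - 1) : q * a ≤ b * q - 1 := by
  have hmul : q * a ≤ b * q - q := by
    rw [mul_comm b, ← Nat.mul_sub_one]
    exact Nat.mul_le_mul_left q h
  rcases q.eq_zero_or_pos with rfl | hq
  · simp
  · omega

theorem subfield_grm_subset_trace_grm_general
    (p s m μx μz : ℕ) (hx1 : m - μz + 1 ≤ μx)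
    (K L : Type*) [Field K] [Field L] [Algebra K L] [Fintype L] :
    {x : (Fin m → L) → K |
        (fun v => algebraMap K L (x v)) ∈ GRM L m ((p ^ s - 1) * (m - μx))} ⊆
      {x : (Fin m → L) → K |
        ∃ c ∈ GRM L m (μz * (p ^ s - 1) - 1),
          x = fun v => Algebra.trace K L (c v)} := by
  have hdeg : (p ^ s - 1) * (m - μx) ≤ μz * (p ^ s - 1) - 1 :=
    Nat.mul_le_mul_sub_one (by omega)
  calc subfieldSubcode K (GRM L m ((p ^ s - 1) * (m - μx)))
      ⊆ traceCode K (GRM L m ((p ^ s - 1) * (m - μx))) :=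
        subfieldSubcode_subset_traceCode fun a _ => const_mul_mem_GRM a
    _ ⊆ traceCode K (GRM L m (μz * (p ^ s - 1) - 1)) := traceCode_mono (GRM_mono hdeg)

/-- The code containment underlying the asymmetric EG LDPC construction: the subfield
subcode over `F_p` of `GRM_q((q-1)(m-μ_x), m)` is contained in the trace code
`tr_{q/p}(GRM_q(μ_z(q-1)-1, m))`. -/
theorem subfield_grm_subset_trace_grm
    (p s m μx μz : ℕ) (hp : p.Prime) (hs : 1 ≤ s) (hm : 2 ≤ m)
    (hz1 : 1 < μz) (hzm : μz < m) (hx1 : m - μz + 1 ≤ μx) (hxm : μx < m)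
    (K L : Type*) [Field K] [Field L] [Algebra K L] [Fintype K] [Fintype L]
    (hK : Fintype.card K = p) (hL : Fintype.card L = p ^ s) :
    {x : (Fin m → L) → K |
        (fun v => algebraMap K L (x v)) ∈ GRM L m ((p ^ s - 1) * (m - μx))} ⊆
      {x : (Fin m → L) → K |
        ∃ c ∈ GRM L m (μz * (p ^ s - 1) - 1),
          x = fun v => Algebra.trace K L (c v)} :=
  subfield_grm_subset_trace_grm_general p s m μx μz hx1 K L
end

section
/- For a binary narrow-sense primitive BCH code of length n = 2^m - 1 with design distance δ = 2t+1 where t ≤ 2^{⌈m/2⌉ - 1} - 1 (i.e., δ - 1 < 2^{⌈m/2⌉}), the 2-cyclotomic cosets modulo n of 1, 3, 5, …, 2t-1 are pairwise distinct and each has size exactly m; consequently the code has dimension n - m·t. -/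
def cyclotomicCoset (n a : ℕ) : Set ℕ := {b | ∃ j : ℕ, b = a * 2 ^ j % n}

/-!
Let `n = 2 ^ m - 1` and `s = ⌈m / 2⌉`; multiplication by `2` has period `m` modulo `n`.
If odd `a, b < 2 ^ s` satisfied `a * 2 ^ k ≡ b [MOD n]` with `0 < k < m`, then either
`k ≤ m - s`, or `b * 2 ^ (m - k) ≡ a` with `m - k ≤ m - s`. In that range the product is still
below `n`, so it equals an odd number although it is even. Hence `(a, j) ↦ a * 2 ^ j % n` is
injective for odd `a < 2 ^ s` and `j < m`, which gives the distinctness and the size of the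
cosets; the union over `1, …, 2t` is the union over the odd numbers `< 2t`, since a coset only
depends on the odd part of its leader.
-/

namespace BCH

theorem two_pow_modEq_two_pow_mod (m i : ℕ) : 2 ^ i ≡ 2 ^ (i % m) [MOD 2 ^ m - 1] := by
  have hperiod : 2 ^ m ≡ 1 [MOD 2 ^ m - 1] :=
    ((Nat.modEq_iff_dvd' Nat.one_le_two_pow).2 dvd_rfl).symm
  calc 2 ^ i = 2 ^ (i % m) * (2 ^ m) ^ (i / m) := by rw [← pow_mul, ← pow_add, Nat.mod_add_div]
    _ ≡ 2 ^ (i % m) * 1 ^ (i / m) [MOD 2 ^ m - 1] := (hperiod.pow _).mul_left _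
    _ = 2 ^ (i % m) := by rw [one_pow, mul_one]

theorem mul_two_pow_modEq_of_modEq {m i j : ℕ} (x : ℕ) (h : i ≡ j [MOD m]) :
    x * 2 ^ i ≡ x * 2 ^ j [MOD 2 ^ m - 1] := by
  refine Nat.ModEq.mul_left x ?_
  calc 2 ^ i ≡ 2 ^ (i % m) [MOD 2 ^ m - 1] := two_pow_modEq_two_pow_mod m i
    _ = 2 ^ (j % m) := by rw [h]
    _ ≡ 2 ^ j [MOD 2 ^ m - 1] := (two_pow_modEq_two_pow_mod m j).symm

theorem mul_two_pow_self_modEq (x m : ℕ) : x * 2 ^ m ≡ x [MOD 2 ^ m - 1] := by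
  simpa using mul_two_pow_modEq_of_modEq x (Nat.modEq_zero_iff_dvd.2 (dvd_refl m))

theorem cyclotomicCoset_eq_image {m : ℕ} (hm : 0 < m) (a : ℕ) :
    cyclotomicCoset (2 ^ m - 1) a = (Finset.range m).image (fun j => a * 2 ^ j % (2 ^ m - 1)) := by
  ext x
  simp only [cyclotomicCoset, Set.mem_ofPred_eq, Finset.coe_image, Finset.coe_range,
    Set.mem_image, Set.mem_Iio]
  constructor
  · rintro ⟨j, rfl⟩
    exact ⟨j % m, Nat.mod_lt j hm, mul_two_pow_modEq_of_modEq a (Nat.mod_modEq j m)⟩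
  · rintro ⟨j, -, rfl⟩
    exact ⟨j, rfl⟩

theorem cyclotomicCoset_mul_two_pow {m : ℕ} (hm : 0 < m) (x k : ℕ) :
    cyclotomicCoset (2 ^ m - 1) (x * 2 ^ k) = cyclotomicCoset (2 ^ m - 1) x := by
  ext y
  constructor
  · rintro ⟨j, rfl⟩
    exact ⟨k + j, by rw [mul_assoc, ← pow_add]⟩
  · rintro ⟨j, rfl⟩
    refine ⟨j + (m - 1) * k, ?_⟩
    have hexp : k + (j + (m - 1) * k) = j + k * m := by
      obtain ⟨m, rfl⟩ := Nat.exists_eq_add_of_lt hm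
      simp only [Nat.add_sub_cancel]
      ring
    rw [mul_assoc, ← pow_add, hexp]
    exact mul_two_pow_modEq_of_modEq x (Nat.add_mul_mod_self_right j k m).symm

theorem lt_two_pow_sub_one {a s m : ℕ} (ha : a < 2 ^ s) (hsm : s < m) : a < 2 ^ m - 1 := by
  have : 2 ^ s * 2 ≤ 2 ^ m := by rw [← pow_succ]; exact Nat.pow_le_pow_right two_pos hsm
  have : 1 ≤ 2 ^ s := Nat.one_le_two_pow
  omega

theorem mul_two_pow_lt_two_pow_sub_one {a s k m : ℕ} (ha : a < 2 ^ s) (hk : 0 < k)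
    (hskm : s + k ≤ m) : a * 2 ^ k < 2 ^ m - 1 := by
  have hbound : (a + 1) * 2 ^ k ≤ 2 ^ m :=
    calc (a + 1) * 2 ^ k ≤ 2 ^ s * 2 ^ k := Nat.mul_le_mul_right _ ha
      _ = 2 ^ (s + k) := (pow_add 2 s k).symm
      _ ≤ 2 ^ m := Nat.pow_le_pow_right two_pos hskm
  have : 2 ≤ 2 ^ k := Nat.le_self_pow hk.ne' 2
  rw [add_mul, one_mul] at hbound
  omega

theorem not_mul_two_pow_modEq_odd {a b s k m : ℕ} (ha : a < 2 ^ s) (hk : 0 < k)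
    (hskm : s + k ≤ m) (hb : Odd b) (hbm : b < 2 ^ m - 1) :
    ¬ a * 2 ^ k ≡ b [MOD 2 ^ m - 1] := by
  intro h
  have heq : a * 2 ^ k = b := h.eq_of_lt_of_lt (mul_two_pow_lt_two_pow_sub_one ha hk hskm) hbm
  have heven : Even (a * 2 ^ k) := (Nat.even_pow.2 ⟨even_two, hk.ne'⟩).mul_left a
  exact Nat.not_even_iff_odd.2 hb (heq ▸ heven)

section

variable {s m : ℕ} (hs : 2 * s ≤ m + 1) (hsm : s < m)
include hs hsm

theorem eq_of_modEq_mul_two_pow {a b k : ℕ} (ha : Odd a) (hb : Odd b) (has : a < 2 ^ s)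
    (hbs : b < 2 ^ s) (hkm : k < m) (h : a ≡ b * 2 ^ k [MOD 2 ^ m - 1]) : a = b ∧ k = 0 := by
  have han := lt_two_pow_sub_one has hsm
  have hbn := lt_two_pow_sub_one hbs hsm
  obtain rfl | hk := Nat.eq_zero_or_pos k
  · rw [pow_zero, mul_one] at h
    exact ⟨h.eq_of_lt_of_lt han hbn, rfl⟩
  exfalso
  by_cases hsk : s + k ≤ m
  · exact not_mul_two_pow_modEq_odd hbs hk hsk ha han h.symm
  · have hback : a * 2 ^ (m - k) ≡ b [MOD 2 ^ m - 1] :=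
      calc a * 2 ^ (m - k) ≡ b * 2 ^ k * 2 ^ (m - k) [MOD 2 ^ m - 1] := h.mul_right _
        _ = b * 2 ^ m := by rw [mul_assoc, ← pow_add, Nat.add_sub_cancel' hkm.le]
        _ ≡ b [MOD 2 ^ m - 1] := mul_two_pow_self_modEq b m
    -- `m - k ≤ m - s` because `2 * s ≤ m + 1`
    exact not_mul_two_pow_modEq_odd has (by omega) (by omega) hb hbn hback

theorem eq_of_mul_two_pow_modEq {a b i j : ℕ} (ha : Odd a) (hb : Odd b) (has : a < 2 ^ s)
    (hbs : b < 2 ^ s) (him : i < m) (hjm : j < m)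
    (h : a * 2 ^ i ≡ b * 2 ^ j [MOD 2 ^ m - 1]) : a = b ∧ i = j := by
  wlog hij : i ≤ j generalizing a b i j
  · obtain ⟨hab, hji⟩ := this hb ha hbs has hjm him h.symm (by omega)
    exact ⟨hab.symm, hji.symm⟩
  have hshift : a ≡ b * 2 ^ (j - i) [MOD 2 ^ m - 1] :=
    calc a ≡ a * 2 ^ m [MOD 2 ^ m - 1] := (mul_two_pow_self_modEq a m).symm
      _ = a * 2 ^ i * 2 ^ (m - i) := by rw [mul_assoc, ← pow_add, Nat.add_sub_cancel' him.le]
      _ ≡ b * 2 ^ j * 2 ^ (m - i) [MOD 2 ^ m - 1] := h.mul_right _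
      _ = b * 2 ^ (j - i + m) := by rw [mul_assoc, ← pow_add]; congr 2; omega
      _ ≡ b * 2 ^ (j - i) [MOD 2 ^ m - 1] := mul_two_pow_modEq_of_modEq b (Nat.add_modEq_right ..)
  obtain ⟨hab, hji⟩ := eq_of_modEq_mul_two_pow hs hsm ha hb has hbs (by omega) hshift
  exact ⟨hab, by omega⟩

theorem injOn_odd_mul_two_pow_mod {t : ℕ} (ht : 2 * t ≤ 2 ^ s) :
    Set.InjOn (fun p : ℕ × ℕ => (2 * p.1 + 1) * 2 ^ p.2 % (2 ^ m - 1))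
      ↑(Finset.range t ×ˢ Finset.range m) := by
  rintro ⟨a, i⟩ hai ⟨b, j⟩ hbj h
  simp only [Finset.coe_product, Finset.coe_range, Set.mem_prod, Set.mem_Iio] at hai hbj
  obtain ⟨hab, hij⟩ := eq_of_mul_two_pow_modEq hs hsm (odd_two_mul_add_one a)
    (odd_two_mul_add_one b) (by omega) (by omega) hai.2 hbj.2 h
  simp only [Prod.mk.injEq]
  omega

end

theorem iUnion_cyclotomicCoset_Icc {m : ℕ} (hm : 0 < m) (t : ℕ) :
    ⋃ i ∈ Finset.Icc 1 (2 * t), cyclotomicCoset (2 ^ m - 1) i =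
      ((Finset.range t ×ˢ Finset.range m).image
        fun p : ℕ × ℕ => (2 * p.1 + 1) * 2 ^ p.2 % (2 ^ m - 1) : Set ℕ) := by
  ext x
  simp only [Set.mem_iUnion, Finset.mem_Icc, Finset.coe_image, Finset.coe_product,
    Finset.coe_range, Set.mem_image, Set.mem_prod, Set.mem_Iio, Prod.exists, exists_prop]
  constructor
  · rintro ⟨i, ⟨hi1, hi2⟩, hx⟩
    obtain ⟨k, c, ⟨a, rfl⟩, rfl⟩ := Nat.exists_eq_two_pow_mul_odd (n := i) (by omega)
    rw [mul_comm, cyclotomicCoset_mul_two_pow hm, cyclotomicCoset_eq_image hm] at hx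
    obtain ⟨j, hj, rfl⟩ := Finset.mem_image.1 hx
    have : 2 * a + 1 ≤ 2 ^ k * (2 * a + 1) := Nat.le_mul_of_pos_left _ (Nat.two_pow_pos k)
    exact ⟨a, j, ⟨by omega, Finset.mem_range.1 hj⟩, rfl⟩
  · rintro ⟨a, j, ⟨ha, -⟩, rfl⟩
    exact ⟨2 * a + 1, ⟨by omega, by omega⟩, j, rfl⟩

end BCH

theorem bch_cosets_distinct_full_general (m t : ℕ)
    (ht : 2 * t < 2 ^ ((m + 1) / 2)) :
    (∀ a b : ℕ, a < t → b < t →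
        cyclotomicCoset (2 ^ m - 1) (2 * a + 1) = cyclotomicCoset (2 ^ m - 1) (2 * b + 1) →
        a = b) ∧
    (∀ a : ℕ, a < t → Nat.card (cyclotomicCoset (2 ^ m - 1) (2 * a + 1)) = m) ∧
    Nat.card (⋃ i ∈ Finset.Icc 1 (2 * t), cyclotomicCoset (2 ^ m - 1) i) = m * t := by
  obtain rfl | htpos := Nat.eq_zero_or_pos t
  · simp
  have hs : 1 < (m + 1) / 2 :=
    (Nat.pow_lt_pow_iff_right one_lt_two).1 (by rw [pow_one]; omega)
  have hm : 0 < m := by omega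
  have hinj := BCH.injOn_odd_mul_two_pow_mod (Nat.mul_div_le (m + 1) 2) (by omega) ht.le
  have hprod {a j : ℕ} (ha : a < t) (hj : j ∈ Finset.range m) :
      (a, j) ∈ Finset.range t ×ˢ Finset.range m :=
    Finset.mem_product.2 ⟨Finset.mem_range.2 ha, hj⟩
  refine ⟨fun a b ha hb hab => ?_, fun a ha => ?_, ?_⟩
  · have hcoset : (2 * a + 1) * 2 ^ 0 % (2 ^ m - 1) ∈ cyclotomicCoset (2 ^ m - 1) (2 * b + 1) :=
      hab ▸ ⟨0, rfl⟩
    rw [BCH.cyclotomicCoset_eq_image hm] at hcoset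
    obtain ⟨j, hj, hji⟩ := Finset.mem_image.1 hcoset
    exact (congrArg Prod.fst (hinj (hprod hb hj) (hprod ha (Finset.mem_range.2 hm)) hji)).symm
  · rw [BCH.cyclotomicCoset_eq_image hm, Nat.card_coe_set_eq, Set.ncard_coe_finset,
      Finset.card_image_of_injOn, Finset.card_range]
    intro i hi j hj hij
    exact congrArg Prod.snd (hinj (hprod ha hi) (hprod ha hj) hij)
  · rw [BCH.iUnion_cyclotomicCoset_Icc hm, Nat.card_coe_set_eq, Set.ncard_coe_finset,
      Finset.card_image_of_injOn hinj, Finset.card_product, Finset.card_range, Finset.card_range,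
      mul_comm]

/-- For a binary narrow-sense primitive BCH code of length `n = 2^m - 1` and design
distance `δ = 2t+1` with `δ - 1 < 2^⌈m/2⌉`, the cyclotomic cosets of `1,3,…,2t-1`
are pairwise distinct, each of size `m`; consequently the union of the cosets of
`1,…,δ-1` has size `m·t`, so the code has dimension `n - m·t`. -/
theorem bch_cosets_distinct_full (m t : ℕ) (hm : 1 ≤ m)
    (ht : 2 * t < 2 ^ ((m + 1) / 2)) :
    (∀ a b : ℕ, a < t → b < t →
        cyclotomicCoset (2 ^ m - 1) (2 * a + 1) = cyclotomicCoset (2 ^ m - 1) (2 * b + 1) →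
        a = b) ∧
    (∀ a : ℕ, a < t → Nat.card (cyclotomicCoset (2 ^ m - 1) (2 * a + 1)) = m) ∧
    Nat.card (⋃ i ∈ Finset.Icc 1 (2 * t), cyclotomicCoset (2 ^ m - 1) i) = m * t :=
  bch_cosets_distinct_full_general m t ht
end
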